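/- arXiv:2512.20931 — 3 statements merged into one kernel-verified Lean document; each statement's English description precedes it below -/
import Mathlib

section
/- (Observability with redundant constraints, Lemma 1.) Let K ≥ 1, let v₁,…,v_K ∈ ℝ³ and n₁,…,n_K ∈ ℝ³, let V and N be the K×3 matrices with rows vᵢ and nᵢ, and let M be the K×9 matrix whose i-th row is vᵢ ⊗ nᵢ. If rank(M) ≥ 4, then rank(V) ≥ 2, rank(N) ≥ 2, and K ≥ 2; i.e., at least two satellite line-of-sight directions are needed and the local velocity vectors must span a subspace of dimension at least 2. -/
open Matrix

/-!
If `rank V ≤ 1` then `vᵢ = cᵢ w` for a fixed `w`, so every row `vᵢ ⊗ nᵢ = w ⊗ (cᵢ nᵢ)` of `M`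
lies in the image of the 3-dimensional row space of `diag(c) N` under `x ↦ w ⊗ x`; hence
`rank M ≤ 3`. The case `rank N ≤ 1` is symmetric, and `rank M ≤ K` gives the bound on `K`.
-/

def faceSplitProduct {ι m n R : Type*} [Mul R] (P : Matrix ι m R) (Q : Matrix ι n R) :
    Matrix ι (m × n) R :=
  fun i p => P i p.1 * Q i p.2

theorem faceSplitProduct_comm {ι m n R : Type*} [CommMagma R] (P : Matrix ι m R)
    (Q : Matrix ι n R) :
    faceSplitProduct P Q =
      (faceSplitProduct Q P).submatrix (Equiv.refl ι) (Equiv.prodComm m n) := by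
  ext i p
  exact mul_comm _ _

theorem Matrix.exists_row_eq_smul_of_rank_le_one {m n K : Type*} [Finite m] [Fintype n] [Field K]
    (A : Matrix m n K) (h : A.rank ≤ 1) : ∃ (w : n → K) (c : m → K), ∀ i, A i = c i • w := by
  rw [rank_eq_finrank_span_row, finrank_le_one_iff] at h
  obtain ⟨w, hw⟩ := h
  choose c hc using fun i => hw ⟨A i, Submodule.subset_span ⟨i, rfl⟩⟩
  exact ⟨w, c, fun i => congrArg Subtype.val (hc i).symm⟩

section FaceSplitRank

variable {ι m n K : Type*} [Fintype ι] [Fintype m] [Fintype n] [Field K]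

theorem rank_faceSplitProduct_le_of_rank_le_one_right (P : Matrix ι m K) (Q : Matrix ι n K)
    (hQ : Q.rank ≤ 1) : (faceSplitProduct P Q).rank ≤ P.rank := by
  classical
  obtain ⟨w, c, hQw⟩ := Q.exists_row_eq_smul_of_rank_le_one hQ
  let B : Matrix m (m × n) K := of fun j p => if p.1 = j then w p.2 else 0
  have hfactor : faceSplitProduct P Q = diagonal c * P * B := by
    ext i p
    rw [mul_apply, Finset.sum_eq_single p.1 (fun j _ hj => by simp [B, Ne.symm hj]) (by simp)]
    simp only [faceSplitProduct, hQw, Pi.smul_apply, smul_eq_mul, diagonal_mul, of_apply,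
      ↓reduceIte, B]
    ring
  calc (faceSplitProduct P Q).rank = (diagonal c * P * B).rank := by rw [hfactor]
    _ ≤ (diagonal c * P).rank := rank_mul_le_left _ _
    _ ≤ P.rank := rank_mul_le_right _ _

theorem rank_faceSplitProduct_le_of_rank_le_one_left (P : Matrix ι m K) (Q : Matrix ι n K)
    (hP : P.rank ≤ 1) : (faceSplitProduct P Q).rank ≤ Q.rank := by
  rw [faceSplitProduct_comm, rank_submatrix _ (Equiv.refl ι)]
  exact rank_faceSplitProduct_le_of_rank_le_one_right Q P hP

end FaceSplitRank

theorem observability_with_redundant_constraints_general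
    (K : ℕ)
    (v n : Fin K → Fin 3 → ℝ)
    (V N : Matrix (Fin K) (Fin 3) ℝ)
    (M : Matrix (Fin K) (Fin 3 × Fin 3) ℝ)
    (hV : ∀ i a, V i a = v i a)
    (hN : ∀ i j, N i j = n i j)
    (hM : ∀ i (p : Fin 3 × Fin 3), M i p = v i p.2 * n i p.1)
    (hrank : 4 ≤ M.rank) :
    2 ≤ V.rank ∧ 2 ≤ N.rank ∧ 2 ≤ K := by
  have hMN : M = faceSplitProduct N V := by
    ext i p
    simp [faceSplitProduct, hM, hN, hV, mul_comm]
  have hNle : N.rank ≤ 3 := by simpa using N.rank_le_card_width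
  have hVle : V.rank ≤ 3 := by simpa using V.rank_le_card_width
  have hMle : M.rank ≤ K := by simpa using M.rank_le_card_height
  refine ⟨?_, ?_, by omega⟩
  · by_contra! hV1
    have := hMN ▸ rank_faceSplitProduct_le_of_rank_le_one_right N V (by omega)
    omega
  · by_contra! hN1
    have := hMN ▸ rank_faceSplitProduct_le_of_rank_le_one_left N V (by omega)
    omega

/-- Observability with redundant constraints, Lemma 1:
if the Khatri–Rao measurement matrix `M` (rows `vᵢ ⊗ nᵢ`) has rank at least 4,
then `rank(V) ≥ 2`, `rank(N) ≥ 2`, and `K ≥ 2`. -/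
theorem observability_with_redundant_constraints
    (K : ℕ) (hK : 1 ≤ K)
    (v n : Fin K → Fin 3 → ℝ)
    (V N : Matrix (Fin K) (Fin 3) ℝ)
    (M : Matrix (Fin K) (Fin 3 × Fin 3) ℝ)
    (hV : ∀ i a, V i a = v i a)
    (hN : ∀ i j, N i j = n i j)
    (hM : ∀ i (p : Fin 3 × Fin 3), M i p = v i p.2 * n i p.1)
    (hrank : 4 ≤ M.rank) :
    2 ≤ V.rank ∧ 2 ≤ N.rank ∧ 2 ≤ K :=
  observability_with_redundant_constraints_general K v n V N M hV hN hM hrank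
end

section
/- (Homogenized feasible set of the alignment QCQP.) Let R be a real 3×3 matrix with columns c₁, c₂, c₃ and let y ∈ ℝ. The constraints RᵀR = y² I₃, R Rᵀ = y² I₃, cᵢ × cⱼ = y · c_k for every cyclic permutation (i,j,k) of (1,2,3), and y² = 1 hold simultaneously if and only if y = 1 or y = −1, and the matrix y·R lies in SO(3) (i.e., (yR)ᵀ(yR) = I₃ and det(yR) = 1). -/
/-!
When `y ^ 2 = 1` the scalar `y` only affects signs, and the constraints say that the columns
`cᵢ` of `R` are orthonormal with `cᵢ × cⱼ = y • c_k`. Then `det R = c₁ ⬝ (c₂ × c₃) = y`, so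
`y • R` has determinant `y ^ 4 = 1`. Conversely, if `y • R ∈ SO(3)` then `det R = y`, and in any
orthogonal matrix the cross product of two consecutive rows, expanded in the orthonormal basis
of rows, is orthogonal to both of them and has component `det` along the third.
-/

open Matrix

namespace Matrix

variable {K : Type*} [CommRing K]

theorem mulVec_cross_rows (Q : Matrix (Fin 3) (Fin 3) K) (i : Fin 3) :
    Q *ᵥ (Q i ⨯₃ Q (i + 1)) = Q.det • Pi.single (i + 2) 1 := by
  fin_cases i <;> ext m <;> fin_cases m <;>
    simp [cross_apply, mulVec, dotProduct, det_fin_three, Fin.sum_univ_three] <;> ring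

theorem cross_rows_of_transpose_mul_self_eq_one {Q : Matrix (Fin 3) (Fin 3) K}
    (hQ : Qᵀ * Q = 1) (i : Fin 3) : Q i ⨯₃ Q (i + 1) = Q.det • Q (i + 2) := by
  calc Q i ⨯₃ Q (i + 1) = (Qᵀ * Q) *ᵥ (Q i ⨯₃ Q (i + 1)) := by rw [hQ, one_mulVec]
    _ = Qᵀ *ᵥ (Q.det • Pi.single (i + 2) 1) := by rw [← mulVec_mulVec, mulVec_cross_rows]
    _ = Q.det • Q (i + 2) := by rw [mulVec_smul, mulVec_single_one]; rfl

theorem det_eq_dotProduct_cross_rows (Q : Matrix (Fin 3) (Fin 3) K) :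
    Q.det = Q 0 ⬝ᵥ Q 1 ⨯₃ Q 2 := by
  rw [triple_product_eq_det]
  congr 1
  ext i j
  fin_cases i <;> rfl

theorem transpose_smul_mul_smul {m n : Type*} [Fintype m] (M : Matrix m n K) (a : K) :
    (a • M)ᵀ * (a • M) = a ^ 2 • (Mᵀ * M) := by
  rw [transpose_smul, smul_mul, Matrix.mul_smul, smul_smul, sq]

end Matrix

/-- Homogenized feasible set of the alignment QCQP: for a real 3×3
matrix `R` with columns `c₁, c₂, c₃` and `y ∈ ℝ`, the constraints
`RᵀR = y²I₃`, `RRᵀ = y²I₃`, `cᵢ × cⱼ = y • c_k` for every cyclic permutation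
`(i,j,k)` of `(1,2,3)`, and `y² = 1` hold simultaneously if and only if
`y = 1 ∨ y = -1` and `y • R ∈ SO(3)`. -/
theorem homogenized_feasible_set
    (R : Matrix (Fin 3) (Fin 3) ℝ) (y : ℝ)
    (c : Fin 3 → Fin 3 → ℝ)
    (hc : ∀ i j, c i j = R j i) :
    (Rᵀ * R = y ^ 2 • (1 : Matrix (Fin 3) (Fin 3) ℝ) ∧
     R * Rᵀ = y ^ 2 • (1 : Matrix (Fin 3) (Fin 3) ℝ) ∧
     c 0 ⨯₃ c 1 = y • c 2 ∧ c 1 ⨯₃ c 2 = y • c 0 ∧ c 2 ⨯₃ c 0 = y • c 1 ∧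
     y ^ 2 = 1) ↔
    ((y = 1 ∨ y = -1) ∧ (y • R)ᵀ * (y • R) = 1 ∧ (y • R).det = 1) := by
  obtain rfl : c = Rᵀ := funext₂ hc
  have hdet_smul : (y • R).det = y ^ 3 * R.det := by simp
  constructor
  · rintro ⟨hRR, -, -, hcross, -, hy⟩
    have hnorm : Rᵀ 0 ⬝ᵥ Rᵀ 0 = y ^ 2 := (congrFun₂ hRR 0 0).trans (by simp)
    have hdetR : R.det = y := by
      rw [← det_transpose, det_eq_dotProduct_cross_rows, hcross, dotProduct_smul, hnorm,
        smul_eq_mul, hy, mul_one]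
    refine ⟨sq_eq_one_iff.mp hy, ?_, ?_⟩
    · rw [transpose_smul_mul_smul, hRR, smul_smul, hy, one_mul, one_smul]
    · rw [hdet_smul, hdetR]
      linear_combination (y ^ 2 + 1) * hy
  · rintro ⟨hy_pm, hO, hdet⟩
    have hy : y ^ 2 = 1 := sq_eq_one_iff.mpr hy_pm
    have hRR : Rᵀ * R = 1 := by rwa [transpose_smul_mul_smul, hy, one_smul] at hO
    have hdetR : Rᵀ.det = y := by
      rw [det_transpose]
      linear_combination y * hdet - (y ^ 2 + 1) * R.det * hy - y * hdet_smul
    have hrows := cross_rows_of_transpose_mul_self_eq_one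
      (by rwa [transpose_transpose, ← mul_eq_one_comm] : Rᵀᵀ * Rᵀ = 1)
    rw [hdetR] at hrows
    exact ⟨by rw [hRR, hy, one_smul], by rw [mul_eq_one_comm.mp hRR, hy, one_smul],
      hrows 0, hrows 1, hrows 2, hy⟩
end

section
/- (Equivalence of the homogenized QCQP and minimization over SO(3).) Let Q̄ be a 10×10 real symmetric matrix indexed by the entries of vec(R) together with one homogenization coordinate y. Let F be the set of pairs (R, y), with R a real 3×3 matrix and y ∈ ℝ, satisfying RᵀR = y²I₃, RRᵀ = y²I₃, cᵢ × cⱼ = y·c_k for every cyclic permutation (i,j,k) of (1,2,3) (c₁,c₂,c₃ the columns of R), and y² = 1. Then the infimum over (R, y) ∈ F of [vec(R); y]ᵀ Q̄ [vec(R); y] equals the infimum over R ∈ SO(3) of [vec(R); 1]ᵀ Q̄ [vec(R); 1]. -/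
/-!
A feasible pair `(R, y)` has `y² = 1` and `det R = c₀ ⬝ (c₁ × c₂) = y ‖c₀‖² = y³ = y`,
so `y R ∈ SO(3)`. Since the cost is a quadratic form in `[vec(R); y]` and
`[vec(y R); 1] = y [vec(R); y]` with `y² = 1`, the pair `(R, y)` and the rotation `y R`
have the same cost. Conversely a rotation `R` satisfies the cross-product constraints with
`y = 1`, because the cross product of two columns is a row of `adj R = det R • R⁻¹ = Rᵀ`.
So the two sets of cost values coincide.
-/

open Matrix

/-- The homogenized variable `[vec(R); y] ∈ ℝ¹⁰`: the column-major vectorization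
of `R` (indexed by pairs `(j, a)` with entry `R j a`) together with the
homogenization coordinate `y`. -/
def homogVec (R : Matrix (Fin 3) (Fin 3) ℝ) (y : ℝ) : (Fin 3 × Fin 3) ⊕ Unit → ℝ :=
  Sum.elim (fun p => R p.1 p.2) (fun _ => y)

section CommRing

variable {α : Type*} [CommRing α]

theorem Matrix.det_fin_three_eq_dotProduct_cross (A : Matrix (Fin 3) (Fin 3) α) :
    A.det = (fun j => A j 0) ⬝ᵥ (fun j => A j 1) ⨯₃ (fun j => A j 2) := by
  rw [← det_transpose, triple_product_eq_det]
  congr 1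
  ext i j
  fin_cases i <;> rfl

theorem Matrix.det_eq_of_cross_col_eq (A : Matrix (Fin 3) (Fin 3) α) {y : α}
    (hA : Aᵀ * A = y ^ 2 • 1)
    (hcross : (fun j => A j 1) ⨯₃ (fun j => A j 2) = y • fun j => A j 0)
    (hy : y ^ 2 = 1) : A.det = y := by
  have hnorm : (fun j => A j 0) ⬝ᵥ (fun j => A j 0) = y ^ 2 := by
    simpa [mul_apply, dotProduct] using congrFun (congrFun hA 0) 0
  rw [det_fin_three_eq_dotProduct_cross, hcross, dotProduct_smul, hnorm, hy, smul_eq_mul, mul_one]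

theorem Matrix.smul_specialOrthogonal (A : Matrix (Fin 3) (Fin 3) α) {y : α}
    (hA : Aᵀ * A = y ^ 2 • 1) (hdet : A.det = y) (hy : y ^ 2 = 1) :
    (y • A)ᵀ * (y • A) = 1 ∧ (y • A).det = 1 := by
  refine ⟨?_, ?_⟩
  · rw [transpose_smul, smul_mul_smul_comm, hA, smul_smul, ← sq, hy, mul_one, one_smul]
  · rw [det_smul, hdet, Fintype.card_fin]
    linear_combination (y ^ 2 + 1) * hy

theorem Matrix.cross_col_eq_adjugate (A : Matrix (Fin 3) (Fin 3) α) (i : Fin 3) :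
    (fun j => A j i) ⨯₃ (fun j => A j (i + 1)) = A.adjugate (i + 2) := by
  fin_cases i <;> funext j <;> fin_cases j <;>
    simp [adjugate_fin_three, cross_apply] <;> ring

theorem Matrix.adjugate_eq_transpose_of_specialOrthogonal {n : Type*} [Fintype n] [DecidableEq n]
    (A : Matrix n n α) (hA : Aᵀ * A = 1) (hdet : A.det = 1) : A.adjugate = Aᵀ := by
  have h := inv_eq_left_inv hA
  rwa [inv_def, hdet, Ring.inverse_one, one_smul] at h

theorem Matrix.cross_col_eq_col_of_specialOrthogonal (A : Matrix (Fin 3) (Fin 3) α)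
    (hA : Aᵀ * A = 1) (hdet : A.det = 1) (i : Fin 3) :
    (fun j => A j i) ⨯₃ (fun j => A j (i + 1)) = fun j => A j (i + 2) := by
  rw [cross_col_eq_adjugate, adjugate_eq_transpose_of_specialOrthogonal A hA hdet]
  rfl

end CommRing

theorem smul_dotProduct_mulVec_smul {α n : Type*} [CommSemiring α] [Fintype n]
    (A : Matrix n n α) (c : α) (v : n → α) :
    (c • v) ⬝ᵥ A *ᵥ (c • v) = c ^ 2 * (v ⬝ᵥ A *ᵥ v) := by
  rw [mulVec_smul, dotProduct_smul, smul_dotProduct, smul_smul, smul_eq_mul, sq]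

theorem homogVec_smul (c : ℝ) (R : Matrix (Fin 3) (Fin 3) ℝ) (y : ℝ) :
    homogVec (c • R) (c * y) = c • homogVec R y := by
  funext x
  cases x <;> rfl

theorem homogenized_qcqp_eq_so3_min_general
    (Qbar : Matrix ((Fin 3 × Fin 3) ⊕ Unit) ((Fin 3 × Fin 3) ⊕ Unit) ℝ) :
    sInf { q : ℝ | ∃ (R : Matrix (Fin 3) (Fin 3) ℝ) (y : ℝ),
        (Rᵀ * R = y ^ 2 • (1 : Matrix (Fin 3) (Fin 3) ℝ) ∧
         R * Rᵀ = y ^ 2 • (1 : Matrix (Fin 3) (Fin 3) ℝ) ∧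
         (fun j => R j 0) ⨯₃ (fun j => R j 1) = y • (fun j => R j 2) ∧
         (fun j => R j 1) ⨯₃ (fun j => R j 2) = y • (fun j => R j 0) ∧
         (fun j => R j 2) ⨯₃ (fun j => R j 0) = y • (fun j => R j 1) ∧
         y ^ 2 = 1) ∧
        q = homogVec R y ⬝ᵥ Qbar.mulVec (homogVec R y) } =
    sInf { q : ℝ | ∃ R : Matrix (Fin 3) (Fin 3) ℝ,
        (Rᵀ * R = 1 ∧ R.det = 1) ∧
        q = homogVec R 1 ⬝ᵥ Qbar.mulVec (homogVec R 1) } := by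
  congr 1
  ext q
  constructor
  · rintro ⟨R, y, ⟨hR, -, -, hcross, -, hy⟩, rfl⟩
    have hvec : homogVec (y • R) 1 = y • homogVec R y := by
      rw [← homogVec_smul, ← sq, hy]
    refine ⟨y • R, R.smul_specialOrthogonal hR (R.det_eq_of_cross_col_eq hR hcross hy) hy, ?_⟩
    rw [hvec, smul_dotProduct_mulVec_smul, hy, one_mul]
  · rintro ⟨R, ⟨hR, hdet⟩, rfl⟩
    have hcross := R.cross_col_eq_col_of_specialOrthogonal hR hdet
    exact ⟨R, 1, ⟨by simpa using hR, by simpa using mul_eq_one_comm.mp hR,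
      by simpa using hcross 0, by simpa using hcross 1, by simpa using hcross 2, one_pow 2⟩,
      rfl⟩

/-- Equivalence of the homogenized QCQP and minimization over
SO(3): for any symmetric 10×10 matrix `Q̄`, the infimum of the homogeneous cost
`[vec(R); y]ᵀ Q̄ [vec(R); y]` over the homogenized feasible set `F`
(`RᵀR = y²I₃`, `RRᵀ = y²I₃`, cyclic column cross-product constraints
`cᵢ × cⱼ = y • c_k`, and `y² = 1`) equals the infimum of
`[vec(R); 1]ᵀ Q̄ [vec(R); 1]` over `R ∈ SO(3)`. -/
theorem homogenized_qcqp_eq_so3_min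
    (Qbar : Matrix ((Fin 3 × Fin 3) ⊕ Unit) ((Fin 3 × Fin 3) ⊕ Unit) ℝ)
    (hQ : Qbar.IsSymm) :
    sInf { q : ℝ | ∃ (R : Matrix (Fin 3) (Fin 3) ℝ) (y : ℝ),
        (Rᵀ * R = y ^ 2 • (1 : Matrix (Fin 3) (Fin 3) ℝ) ∧
         R * Rᵀ = y ^ 2 • (1 : Matrix (Fin 3) (Fin 3) ℝ) ∧
         (fun j => R j 0) ⨯₃ (fun j => R j 1) = y • (fun j => R j 2) ∧
         (fun j => R j 1) ⨯₃ (fun j => R j 2) = y • (fun j => R j 0) ∧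
         (fun j => R j 2) ⨯₃ (fun j => R j 0) = y • (fun j => R j 1) ∧
         y ^ 2 = 1) ∧
        q = homogVec R y ⬝ᵥ Qbar.mulVec (homogVec R y) } =
    sInf { q : ℝ | ∃ R : Matrix (Fin 3) (Fin 3) ℝ,
        (Rᵀ * R = 1 ∧ R.det = 1) ∧
        q = homogVec R 1 ⬝ᵥ Qbar.mulVec (homogVec R 1) } :=
  homogenized_qcqp_eq_so3_min_general Qbar
end
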